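/- Let ψ : ℝ → ℂ be continuously differentiable with both ψ and its derivative ψ' square-integrable over ℝ. Then for every δ > 0 and every t ∈ ℝ one has |ψ(t)|² ≤ δ · ∫_ℝ |ψ'(y)|² dy + δ^{-1} · ∫_ℝ |ψ(y)|² dy. -/

import Mathlib

/-!
The derivative of `‖ψ‖²` is `2⟪ψ, ψ'⟫`, which is bounded pointwise by `δ‖ψ'‖² + δ⁻¹‖ψ‖²`.
Integrating between `s` and `t` gives `‖ψ t‖² ≤ ‖ψ s‖² + δ ∫ ‖ψ'‖² + δ⁻¹ ∫ ‖ψ‖²` for all `s`,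
and since `‖ψ‖²` is integrable over a set of infinite measure, `‖ψ s‖²` can be made arbitrarily
small.
-/

open MeasureTheory Set

theorem MeasureTheory.Integrable.exists_lt_of_measure_univ_eq_top {α : Type*}
    [MeasurableSpace α] {μ : Measure α} (hμ : μ univ = ⊤) {f : α → ℝ} (hf : Integrable f μ)
    {ε : ℝ} (hε : 0 < ε) : ∃ x, f x < ε := by
  by_contra! hge
  have hconst : Integrable (fun _ : α => ε) μ :=
    hf.mono' aestronglyMeasurable_const
      (ae_of_all _ fun x => by rw [Real.norm_eq_abs, abs_of_pos hε]; exact hge x)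
  rcases integrable_const_iff.1 hconst with hε0 | hfin
  · exact hε.ne' hε0
  · exact measure_ne_top μ univ hμ

theorem sub_le_integral_of_abs_deriv_le {g g' φ : ℝ → ℝ} (hg : ∀ x, HasDerivAt g (g' x) x)
    (hφ : Integrable φ) (hg'φ : ∀ x, |g' x| ≤ φ x) (s t : ℝ) :
    g t - g s ≤ ∫ x, φ x := by
  have of_le : ∀ {f f' : ℝ → ℝ}, (∀ x, HasDerivAt f (f' x) x) → (∀ x, f' x ≤ φ x) →
      ∀ a b, a ≤ b → f b - f a ≤ ∫ x, φ x := by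
    intro f f' hf hf'φ a b hab
    calc f b - f a ≤ ∫ x in a..b, φ x :=
          intervalIntegral.sub_le_integral_of_hasDeriv_right_of_le hab
            (continuous_iff_continuousAt.2 fun x => (hf x).continuousAt).continuousOn
            (fun x _ => (hf x).hasDerivWithinAt) hφ.integrableOn fun x _ => hf'φ x
      _ = ∫ x in Ioc a b, φ x := intervalIntegral.integral_of_le hab
      _ ≤ ∫ x, φ x :=
          setIntegral_le_integral hφ (ae_of_all _ fun x => (abs_nonneg _).trans (hg'φ x))
  rcases le_total s t with hst | hts
  · exact of_le hg (fun x => (le_abs_self _).trans (hg'φ x)) s t hst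
  · have := of_le (f := fun x => -g x) (fun x => (hg x).neg)
      (fun x => (neg_le_abs _).trans (hg'φ x)) t s hts
    linarith

section InnerProductSpace

variable {E : Type*} [NormedAddCommGroup E] [InnerProductSpace ℝ E]

theorem abs_two_mul_real_inner_le {δ : ℝ} (hδ : 0 < δ) (a b : E) :
    |2 * inner ℝ a b| ≤ δ * ‖b‖ ^ 2 + δ⁻¹ * ‖a‖ ^ 2 :=
  calc |2 * inner ℝ a b| = 2 * |inner ℝ b a| := by rw [abs_mul, abs_two, real_inner_comm]
    _ ≤ 2 * (‖b‖ * ‖a‖) := by gcongr; exact abs_real_inner_le_norm b a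
    _ = 2 * ‖b‖ * ‖a‖ := (mul_assoc _ _ _).symm
    _ ≤ δ * ‖b‖ ^ 2 + δ⁻¹ * ‖a‖ ^ 2 := two_mul_le_add_mul_sq hδ

theorem sq_norm_sub_sq_norm_le_of_hasDerivAt {ψ ψ' : ℝ → E}
    (hdiff : ∀ x, HasDerivAt ψ (ψ' x) x) (hψ : Integrable fun y => ‖ψ y‖ ^ 2)
    (hψ' : Integrable fun y => ‖ψ' y‖ ^ 2) {δ : ℝ} (hδ : 0 < δ) (s t : ℝ) :
    ‖ψ t‖ ^ 2 - ‖ψ s‖ ^ 2 ≤ δ * (∫ y, ‖ψ' y‖ ^ 2) + δ⁻¹ * ∫ y, ‖ψ y‖ ^ 2 := by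
  rw [← integral_const_mul, ← integral_const_mul,
    ← integral_add (hψ'.const_mul δ) (hψ.const_mul δ⁻¹)]
  exact sub_le_integral_of_abs_deriv_le (fun x => (hdiff x).norm_sq)
    ((hψ'.const_mul δ).add (hψ.const_mul δ⁻¹)) (fun x => abs_two_mul_real_inner_le hδ _ _) s t

end InnerProductSpace

theorem stmt_1 (ψ ψ' : ℝ → ℂ)
    (hdiff : ∀ x : ℝ, HasDerivAt ψ (ψ' x) x)
    (hψ : Integrable (fun y : ℝ => ‖ψ y‖ ^ 2))
    (hψ' : Integrable (fun y : ℝ => ‖ψ' y‖ ^ 2)) :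
    ∀ δ > (0 : ℝ), ∀ t : ℝ,
      ‖ψ t‖ ^ 2 ≤ δ * (∫ y : ℝ, ‖ψ' y‖ ^ 2) + δ⁻¹ * ∫ y : ℝ, ‖ψ y‖ ^ 2 := by
  intro δ hδ t
  refine le_of_forall_pos_le_add fun ε hε => ?_
  obtain ⟨s, hs⟩ := hψ.exists_lt_of_measure_univ_eq_top Real.volume_univ hε
  have := sq_norm_sub_sq_norm_le_of_hasDerivAt hdiff hψ hψ' hδ s t
  linarith
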